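/- Let n ≥ 5 be odd and m ≥ 4. In J(n,m), for vertices x ∈ V(C), y ∈ V(C') on two internal cycles C, C' (indexed by k, k') sharing no edge, d(x,y) = n+1 if and only if x ∈ {u_{nk+⌊n/2⌋+1}, u_{nk+⌊n/2⌋+2}} and y ∈ {u_{nk'+⌊n/2⌋+1}, u_{nk'+⌊n/2⌋+2}}. -/

import Mathlib

/-- The generalized Jahangir graph `J(n,m)`: vertices are `none` (the central
vertex `c`) and `some a` for `a : ZMod (n*m)` (the cycle vertex `u_{a+1}`).
Cycle vertices are adjacent when consecutive, and `c` is adjacent to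
`u_{nk+1}`, i.e. to `some (n*k)`, for `k = 0, …, m-1`. -/
def jahangir (n m : ℕ) : SimpleGraph (Option (ZMod (n * m))) where
  Adj x y :=
    (x = none ∧ ∃ a : ZMod (n * m), y = some a ∧
        ∃ k : ℕ, k < m ∧ a = ((n * k : ℕ) : ZMod (n * m))) ∨
    (y = none ∧ ∃ a : ZMod (n * m), x = some a ∧
        ∃ k : ℕ, k < m ∧ a = ((n * k : ℕ) : ZMod (n * m))) ∨
    (∃ a b : ZMod (n * m), x = some a ∧ y = some b ∧ a ≠ b ∧ (b = a + 1 ∨ a = b + 1))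
  symm := by
    refine ⟨?_⟩
    rintro x y (⟨hx, a, hy, hk⟩ | ⟨hy, a, hx, hk⟩ | ⟨a, b, hx, hy, hab, h⟩)
    · exact Or.inr (Or.inl ⟨hx, a, hy, hk⟩)
    · exact Or.inl ⟨hy, a, hx, hk⟩
    · exact Or.inr (Or.inr ⟨b, a, hy, hx, hab.symm, h.symm⟩)
  loopless := by
    refine ⟨?_⟩
    rintro x (⟨hx, a, hy, _⟩ | ⟨hy, a, hx, _⟩ | ⟨a, b, hx, hy, hab, _⟩)
    · rw [hx] at hy; exact nomatch hy
    · rw [hy] at hx; exact nomatch hx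
    · rw [hx] at hy; exact hab (Option.some.inj hy)

/-- `u` and `v` are mutually maximally distant in `G`. -/
def MMD {V : Type*} (G : SimpleGraph V) (u v : V) : Prop :=
  (∀ w, G.Adj u w → G.dist w v ≤ G.dist u v) ∧
  (∀ w, G.Adj v w → G.dist u w ≤ G.dist u v)

/-- The strong resolving graph of `G`: distinct vertices are adjacent iff MMD. -/
def strongResolvingGraph {V : Type*} (G : SimpleGraph V) : SimpleGraph V where
  Adj u v := u ≠ v ∧ MMD G u v
  symm := by
    refine ⟨?_⟩
    rintro u v ⟨hne, h1, h2⟩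
    refine ⟨hne.symm, ?_, ?_⟩
    · intro w hw
      rw [SimpleGraph.dist_comm, SimpleGraph.dist_comm (u := v)]
      exact h2 w hw
    · intro w hw
      rw [SimpleGraph.dist_comm, SimpleGraph.dist_comm (u := v)]
      exact h1 w hw
  loopless := by refine ⟨?_⟩; intro u h; exact h.1 rfl

/-- The vertex covering number `α(G)`. -/
noncomputable def vertexCoverNumber {V : Type*} (G : SimpleGraph V) : ℕ :=
  sInf {k | ∃ S : Finset V, S.card = k ∧ ∀ u v, G.Adj u v → u ∈ S ∨ v ∈ S}

/-- The independence number `β(G)`. -/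
noncomputable def indepNumber {V : Type*} (G : SimpleGraph V) : ℕ :=
  sSup {k | ∃ S : Finset V, S.card = k ∧ ∀ u ∈ S, ∀ v ∈ S, ¬ G.Adj u v}

/-- `W` is a strong resolving set of `G`. -/
def IsStrongResolvingSet {V : Type*} (G : SimpleGraph V) (W : Set V) : Prop :=
  ∀ u v : V, u ≠ v → ∃ w ∈ W,
    G.dist u w = G.dist u v + G.dist v w ∨ G.dist v w = G.dist v u + G.dist u w

/-- The strong metric dimension of `G`. -/
noncomputable def sdim {V : Type*} (G : SimpleGraph V) : ℕ :=
  sInf {k | ∃ W : Finset V, W.card = k ∧ IsStrongResolvingSet G ↑W}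

/-- Vertex set of the internal cycle `c u_{nk+1} … u_{n(k+1)+1} c` of `J(n,m)`. -/
def internalCycle (n m k : ℕ) : Set (Option (ZMod (n * m))) :=
  insert none {x | ∃ i ≤ n, x = some ((n * k + i : ℕ) : ZMod (n * m))}

/-- Cycle vertices of `J(n,m)` not adjacent to the central vertex `c` (the set `U₂`). -/
def inU2 (n m : ℕ) (x : Option (ZMod (n * m))) : Prop :=
  ∃ a : ZMod (n * m), x = some a ∧ ¬ ∃ k : ℕ, k < m ∧ a = ((n * k : ℕ) : ZMod (n * m))

namespace JahAux

open SimpleGraph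

/-- Potential function: explicit formula for the distance to the cycle vertex `y`. -/
def pot (n m : ℕ) (y : ZMod (n*m)) : Option (ZMod (n*m)) → ℕ
  | none => min (y.val % n) (n - y.val % n) + 1
  | some b => min (min ((b - y).val) (n*m - (b - y).val))
      (min (b.val % n) (n - b.val % n) + min (y.val % n) (n - y.val % n) + 2)

lemma pot_some (n m : ℕ) (y b : ZMod (n*m)) : pot n m y (some b) =
    min (min ((b - y).val) (n*m - (b - y).val))
      (min (b.val % n) (n - b.val % n) + min (y.val % n) (n - y.val % n) + 2) := rfl

lemma pot_none (n m : ℕ) (y : ZMod (n*m)) :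
    pot n m y none = min (y.val % n) (n - y.val % n) + 1 := rfl

section

variable {n m : ℕ} (hn : 2 ≤ n) (hm : 1 ≤ m)

include hn hm

lemma hN1 : 1 < n * m := by nlinarith

/-- The cycle distance from a hub to `y` is at least the hub-distance of `y`. -/
lemma cyc_ge (y b : ZMod (n*m)) (hb : b.val % n = 0) :
    min (y.val % n) (n - y.val % n) ≤ min ((b - y).val) (n*m - (b - y).val) := by
  have hN : 1 < n * m := hN1 hn hm
  haveI : NeZero (n*m) := ⟨by omega⟩
  have hnm : n ∣ n*m := dvd_mul_right n m
  set d := (b - y).val with hd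
  have h1 : (d + y.val) % (n*m) = b.val := by
    have : (b - y) + y = b := by ring
    rw [← this, ZMod.val_add]
  have h2 : (d + y.val) % n = 0 := by
    have := congrArg (· % n) h1
    simpa [Nat.mod_mod_of_dvd _ hnm, hb] using this
  set e := y.val % n with he
  have hen : e < n := Nat.mod_lt _ (by omega)
  have h3 : (d + e) % n = 0 := by
    rw [Nat.add_mod, Nat.mod_eq_of_lt hen, he, ← Nat.add_mod]
    exact h2
  have hdvd : n ∣ d + e := Nat.dvd_of_mod_eq_zero h3
  have hdlt : d < n*m := ZMod.val_lt _
  rcases Nat.eq_zero_or_pos e with he0 | hepos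
  · simp [he0]
  · have h4 : n ≤ d + e := Nat.le_of_dvd (by omega) hdvd
    have h5 : e ≤ n*m - d := by
      by_contra h5
      push_neg at h5
      obtain ⟨q, hq⟩ := hdvd
      have hq1 : m < q := by
        by_contra hq1
        push_neg at hq1
        have := Nat.mul_le_mul_left n hq1
        omega
      have := Nat.mul_le_mul_left n (show m+1 ≤ q by omega)
      have hmul : n*(m+1) = n*m + n := by ring
      omega
    omega

lemma step_cyc (c : ZMod (n*m)) :
    min ((c+1).val) (n*m - (c+1).val) ≤ min (c.val) (n*m - c.val) + 1 ∧
    min (c.val) (n*m - c.val) ≤ min ((c+1).val) (n*m - (c+1).val) + 1 := by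
  have hN : 1 < n * m := hN1 hn hm
  haveI : NeZero (n*m) := ⟨by omega⟩
  haveI : Fact (1 < n*m) := ⟨hN⟩
  have h1 : (c+1).val = (c.val + 1) % (n*m) := by
    rw [ZMod.val_add, ZMod.val_one]
  have hlt : c.val < n*m := ZMod.val_lt c
  rcases Nat.lt_or_ge (c.val + 1) (n*m) with h | h
  · rw [h1, Nat.mod_eq_of_lt h]; omega
  · have h2 : c.val + 1 = n*m := by omega
    rw [h1, h2, Nat.mod_self]; omega

lemma step_hub (c : ZMod (n*m)) : (c+1).val % n = (c.val % n + 1) % n := by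
  have hN : 1 < n * m := hN1 hn hm
  haveI : NeZero (n*m) := ⟨by omega⟩
  haveI : Fact (1 < n*m) := ⟨hN⟩
  have hnm : n ∣ n*m := dvd_mul_right n m
  rw [ZMod.val_add, ZMod.val_one, Nat.mod_mod_of_dvd _ hnm, Nat.add_mod,
    Nat.mod_eq_of_lt (show 1 < n by omega)]

lemma hub_val (κ : ℕ) : (((n*κ : ℕ) : ZMod (n*m)).val) % n = 0 := by
  have hN : 1 < n * m := hN1 hn hm
  haveI : NeZero (n*m) := ⟨by omega⟩
  rw [ZMod.val_natCast, Nat.mod_mod_of_dvd _ (dvd_mul_right n m), Nat.mul_mod_right]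

lemma step_pot (y b : ZMod (n*m)) :
    pot n m y (some (b+1)) ≤ pot n m y (some b) + 1 ∧
    pot n m y (some b) ≤ pot n m y (some (b+1)) + 1 := by
  have hc := step_cyc hn hm (b - y)
  have hcy : (b + 1 - y) = (b - y) + 1 := by ring
  have hh := step_hub hn hm b
  have hbn : b.val % n < n := Nat.mod_lt _ (by omega)
  have hstep : min ((b.val % n + 1) % n) (n - (b.val % n + 1) % n)
        ≤ min (b.val % n) (n - b.val % n) + 1 ∧
      min (b.val % n) (n - b.val % n)
        ≤ min ((b.val % n + 1) % n) (n - (b.val % n + 1) % n) + 1 := by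
    rcases Nat.lt_or_ge (b.val % n + 1) n with h | h
    · rw [Nat.mod_eq_of_lt h]; omega
    · have h2 : b.val % n + 1 = n := by omega
      rw [h2, Nat.mod_self]; omega
  rw [pot_some, pot_some, hcy, hh]
  omega

lemma pot_lip (y : ZMod (n*m)) {u v : Option (ZMod (n*m))}
    (h : (jahangir n m).Adj u v) : pot n m y u ≤ pot n m y v + 1 := by
  rcases h with ⟨hu, a, hv, κ, hκ, ha⟩ | ⟨hv, a, hu, κ, hκ, ha⟩ | ⟨a, b, hu, hv, hab, hor⟩
  · subst hu hv ha
    have h1 := cyc_ge hn hm y _ (hub_val hn hm κ)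
    rw [pot_none, pot_some]
    omega
  · subst hv hu ha
    have h1 := hub_val hn hm (m := m) κ
    rw [pot_none, pot_some, h1]
    omega
  · subst hu hv
    rcases hor with h1 | h1
    · subst h1; exact (step_pot hn hm y a).2
    · subst h1; exact (step_pot hn hm y b).1

lemma pot_walk (y : ZMod (n*m)) {u v : Option (ZMod (n*m))}
    (p : (jahangir n m).Walk u v) : pot n m y u ≤ pot n m y v + p.length := by
  induction p with
  | nil => simp
  | @cons u w v h p ih =>
    have h1 := pot_lip hn hm y h
    rw [SimpleGraph.Walk.length_cons]
    omega

lemma chain (a : ZMod (n*m)) (t : ℕ) :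
    ∃ p : (jahangir n m).Walk (some (a + (t : ZMod (n*m)))) (some a), p.length = t := by
  have hN : 1 < n * m := hN1 hn hm
  haveI : NeZero (n*m) := ⟨by omega⟩
  haveI : Fact (1 < n*m) := ⟨hN⟩
  induction t with
  | zero => exact ⟨SimpleGraph.Walk.nil.copy (by simp) rfl, by simp⟩
  | succ t ih =>
    obtain ⟨p, hp⟩ := ih
    have heq : (a + ((t+1 : ℕ) : ZMod (n*m))) = (a + (t : ℕ)) + 1 := by push_cast; ring
    have hadj : (jahangir n m).Adj (some (a + ((t+1 : ℕ) : ZMod (n*m))))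
        (some (a + ((t : ℕ) : ZMod (n*m)))) := by
      refine Or.inr (Or.inr ⟨_, _, rfl, rfl, ?_, Or.inr heq⟩)
      rw [heq]
      intro hcon
      exact one_ne_zero (add_eq_left.mp hcon)
    exact ⟨SimpleGraph.Walk.cons hadj p, by simp [hp]⟩

lemma toHub (k i : ℕ) (hk : k < m) (hi : i ≤ n) :
    ∃ p : (jahangir n m).Walk (some ((n*k+i : ℕ) : ZMod (n*m))) none,
      p.length = min i (n - i) + 1 := by
  have hN : 1 < n * m := hN1 hn hm
  haveI : NeZero (n*m) := ⟨by omega⟩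
  rcases le_total i (n - i) with hle | hle
  · obtain ⟨p, hp⟩ := chain hn hm ((n*k : ℕ) : ZMod (n*m)) i
    have hcast : some (((n*k:ℕ) : ZMod (n*m)) + (i : ZMod (n*m)))
        = some (((n*k+i : ℕ) : ZMod (n*m))) := by push_cast; ring_nf
    have hadj : (jahangir n m).Adj (some ((n*k:ℕ):ZMod (n*m))) none :=
      Or.inr (Or.inl ⟨rfl, _, rfl, k, hk, rfl⟩)
    refine ⟨(p.copy hcast rfl).concat hadj, ?_⟩
    rw [SimpleGraph.Walk.length_concat, SimpleGraph.Walk.length_copy, hp]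
    omega
  · obtain ⟨p, hp⟩ := chain hn hm (((n*k+i : ℕ)) : ZMod (n*m)) (n - i)
    have hcast : some ((((n*k+i:ℕ)) : ZMod (n*m)) + ((n-i : ℕ) : ZMod (n*m)))
        = some (((n*(k+1) : ℕ)) : ZMod (n*m)) := by
      have h1 : n*k + i + (n - i) = n*(k+1) := by
        have h2 : n*(k+1) = n*k + n := by ring
        omega
      rw [← Nat.cast_add, h1]
    have hadj : (jahangir n m).Adj (some ((n*(k+1) : ℕ) : ZMod (n*m))) none := by
      rcases Nat.lt_or_ge (k+1) m with h | h
      · exact Or.inr (Or.inl ⟨rfl, _, rfl, k+1, h, rfl⟩)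
      · have hk1 : k + 1 = m := by omega
        refine Or.inr (Or.inl ⟨rfl, _, rfl, 0, by omega, ?_⟩)
        rw [hk1, Nat.mul_zero, ZMod.natCast_self, Nat.cast_zero]
    refine ⟨(p.reverse.copy rfl hcast).concat hadj, ?_⟩
    rw [SimpleGraph.Walk.length_concat, SimpleGraph.Walk.length_copy,
      SimpleGraph.Walk.length_reverse, hp]
    omega

end

/-- The key lower-and-upper bound computation for midpoint vertices. -/
lemma key {n m : ℕ} (hn : 5 ≤ n) (hm : 4 ≤ m) (h : ℕ) (hnh : n = 2*h+1)
    (k k' : ℕ) (hk : k < m) (hk' : k' < m)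
    (hsep : (k'+2 ≤ k ∧ k ≤ m-2+k') ∨ (k+2 ≤ k' ∧ k' ≤ m-2+k))
    (i j : ℕ) (hi : i = h ∨ i = h+1) (hj : j = h ∨ j = h+1) :
    (jahangir n m).dist (some ((n*k+i : ℕ) : ZMod (n*m)))
      (some ((n*k'+j : ℕ) : ZMod (n*m))) = n+1 := by
  have hn2 : 2 ≤ n := by omega
  have hm1 : 1 ≤ m := by omega
  have hN : 1 < n * m := hN1 hn2 hm1
  haveI : NeZero (n*m) := ⟨by omega⟩
  have hin : i ≤ n := by omega
  have hjn : j ≤ n := by omega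
  -- upper bound
  obtain ⟨p, hp⟩ := toHub hn2 hm1 k i hk hin
  obtain ⟨q, hq⟩ := toHub hn2 hm1 k' j hk' hjn
  have hupper : (jahangir n m).dist (some ((n*k+i : ℕ) : ZMod (n*m)))
      (some ((n*k'+j : ℕ) : ZMod (n*m))) ≤ n + 1 := by
    have hle := SimpleGraph.dist_le (p.append q.reverse)
    rw [SimpleGraph.Walk.length_append, SimpleGraph.Walk.length_reverse, hp, hq] at hle
    omega
  -- values
  have hmulk : n*(k+1) ≤ n*m := Nat.mul_le_mul_left n (by omega)
  have hmulk' : n*(k'+1) ≤ n*m := Nat.mul_le_mul_left n (by omega)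
  have hsk : n*(k+1) = n*k + n := Nat.mul_succ n k
  have hsk' : n*(k'+1) = n*k' + n := Nat.mul_succ n k'
  have halt : n*k+i < n*m := by omega
  have hblt : n*k'+j < n*m := by omega
  set X : ZMod (n*m) := ((n*k+i : ℕ) : ZMod (n*m)) with hX
  set Y : ZMod (n*m) := ((n*k'+j : ℕ) : ZMod (n*m)) with hY
  have hvX : X.val = n*k+i := ZMod.val_natCast_of_lt halt
  have hvY : Y.val = n*k'+j := ZMod.val_natCast_of_lt hblt
  have hrX : X.val % n = i := by rw [hvX, Nat.mul_add_mod, Nat.mod_eq_of_lt (by omega)]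
  have hrY : Y.val % n = j := by rw [hvY, Nat.mul_add_mod, Nat.mod_eq_of_lt (by omega)]
  -- cycle distance
  have hcast : X - Y = (((n*k+i) + (n*m - (n*k'+j)) : ℕ) : ZMod (n*m)) := by
    rw [Nat.cast_add, Nat.cast_sub (le_of_lt hblt), ZMod.natCast_self, hX, hY]
    ring
  have hdval : (X - Y).val = ((n*k+i) + (n*m - (n*k'+j))) % (n*m) := by
    rw [hcast, ZMod.val_natCast]
  set S : ℕ := (n*k+i) + (n*m - (n*k'+j)) with hS
  have hcycbound : n + 1 ≤ (X - Y).val ∧ n + 1 ≤ n*m - (X - Y).val := by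
    rcases hsep with ⟨h1, h2⟩ | ⟨h1, h2⟩
    · have m1 : n*(k'+2) ≤ n*k := Nat.mul_le_mul_left n h1
      have m2 : n*k ≤ n*(m-2+k') := Nat.mul_le_mul_left n h2
      have e1 : n*(k'+2) = n*k' + 2*n := by ring
      have e2 : n*(m-2+k') = n*(m-2) + n*k' := by ring
      have e3 : n*(m-2) + n*2 = n*m := by
        rw [← Nat.mul_add]
        congr 1
        omega
      have hSge : n*m ≤ S := by omega
      have hSlt : S < 2*(n*m) := by omega
      have hmod : S % (n*m) = S - n*m := by
        rw [Nat.mod_eq_sub_mod hSge, Nat.mod_eq_of_lt (by omega)]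
      rw [hdval, hmod]
      omega
    · have m1 : n*(k+2) ≤ n*k' := Nat.mul_le_mul_left n h1
      have m2 : n*k' ≤ n*(m-2+k) := Nat.mul_le_mul_left n h2
      have e1 : n*(k+2) = n*k + 2*n := by ring
      have e2 : n*(m-2+k) = n*(m-2) + n*k := by ring
      have e3 : n*(m-2) + n*2 = n*m := by
        rw [← Nat.mul_add]
        congr 1
        omega
      have hSlt : S < n*m := by omega
      have hmod : S % (n*m) = S := Nat.mod_eq_of_lt hSlt
      rw [hdval, hmod]
      omega
  -- lower bound via the potential
  have hlower : n + 1 ≤ (jahangir n m).dist (some X) (some Y) := by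
    have hreach : (jahangir n m).Reachable (some X) (some Y) :=
      ⟨p.append q.reverse⟩
    obtain ⟨w, hw⟩ := hreach.exists_walk_length_eq_dist
    have hwalk := pot_walk hn2 hm1 Y w
    have hY0 : pot n m Y (some Y) = 0 := by
      rw [pot_some, sub_self, ZMod.val_zero]
      simp
    have hpx : n + 1 ≤ pot n m Y (some X) := by
      rw [pot_some, hrX, hrY]
      omega
    omega
  omega

end JahAux

theorem stmt_15 (n m : ℕ) (hn : 5 ≤ n) (hodd : Odd n) (hm : 4 ≤ m)
    (k k' : ℕ) (hk : k < m) (hk' : k' < m) (hkk : k ≠ k')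
    (hshare : ((k : ℤ) - (k' : ℤ)).natAbs ≠ 1 ∧ ((k : ℤ) - (k' : ℤ)).natAbs ≠ m - 1)
    (x y : Option (ZMod (n * m)))
    (hx : x ∈ internalCycle n m k) (hy : y ∈ internalCycle n m k') :
    (jahangir n m).dist x y = n + 1 ↔
      (x ∈ ({some ((n * k + n / 2 : ℕ) : ZMod (n * m)), some ((n * k + n / 2 + 1 : ℕ) : ZMod (n * m))} : Set (Option (ZMod (n * m)))) ∧
       y ∈ ({some ((n * k' + n / 2 : ℕ) : ZMod (n * m)), some ((n * k' + n / 2 + 1 : ℕ) : ZMod (n * m))} : Set (Option (ZMod (n * m))))) := by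
  have hn2 : 2 ≤ n := by omega
  have hm1 : 1 ≤ m := by omega
  have hN : 1 < n * m := JahAux.hN1 hn2 hm1
  haveI : NeZero (n*m) := ⟨by omega⟩
  obtain ⟨h, hnh⟩ : ∃ h, n = 2*h + 1 := by
    obtain ⟨t, ht⟩ := hodd; exact ⟨t, by omega⟩
  have hhalf : n / 2 = h := by omega
  have hsep : (k'+2 ≤ k ∧ k ≤ m-2+k') ∨ (k+2 ≤ k' ∧ k' ≤ m-2+k) := by
    obtain ⟨h1, h2⟩ := hshare
    omega
  rcases hx with rfl | ⟨i, hi, rfl⟩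
  · -- x = c : both sides are false
    constructor
    · intro hd
      exfalso
      rcases hy with rfl | ⟨j, hj, rfl⟩
      · rw [SimpleGraph.dist_self] at hd; omega
      · obtain ⟨q, hq⟩ := JahAux.toHub hn2 hm1 k' j hk' hj
        have hle := SimpleGraph.dist_le q.reverse
        rw [SimpleGraph.Walk.length_reverse, hq] at hle
        omega
    · rintro ⟨hx1, -⟩
      simp only [Set.mem_insert_iff, Set.mem_singleton_iff] at hx1
      rcases hx1 with h1 | h1 <;> exact nomatch h1
  · rcases hy with rfl | ⟨j, hj, rfl⟩
    · -- y = c : both sides are false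
      constructor
      · intro hd
        exfalso
        obtain ⟨q, hq⟩ := JahAux.toHub hn2 hm1 k i hk hi
        have hle := SimpleGraph.dist_le q
        rw [hq] at hle
        omega
      · rintro ⟨-, hy1⟩
        simp only [Set.mem_insert_iff, Set.mem_singleton_iff] at hy1
        rcases hy1 with h1 | h1 <;> exact nomatch h1
    · -- main case : both vertices on the outer cycle
      obtain ⟨p, hp⟩ := JahAux.toHub hn2 hm1 k i hk hi
      obtain ⟨q, hq⟩ := JahAux.toHub hn2 hm1 k' j hk' hj
      have hub : (jahangir n m).dist (some ((n*k+i : ℕ) : ZMod (n*m)))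
          (some ((n*k'+j : ℕ) : ZMod (n*m))) ≤ min i (n-i) + min j (n-j) + 2 := by
        have hle := SimpleGraph.dist_le (p.append q.reverse)
        rw [SimpleGraph.Walk.length_append, SimpleGraph.Walk.length_reverse, hp, hq] at hle
        omega
      constructor
      · intro hd
        have hij : (i = h ∨ i = h + 1) ∧ (j = h ∨ j = h + 1) := by omega
        constructor
        · rcases hij.1 with h1 | h1
          · have : n * k + i = n * k + n / 2 := by omega
            rw [this]
            exact Set.mem_insert _ _
          · have : n * k + i = n * k + n / 2 + 1 := by omega
            rw [this]
            exact Set.mem_insert_iff.mpr (Or.inr rfl)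
        · rcases hij.2 with h1 | h1
          · have : n * k' + j = n * k' + n / 2 := by omega
            rw [this]
            exact Set.mem_insert _ _
          · have : n * k' + j = n * k' + n / 2 + 1 := by omega
            rw [this]
            exact Set.mem_insert_iff.mpr (Or.inr rfl)
      · rintro ⟨hx1, hy1⟩
        simp only [Set.mem_insert_iff, Set.mem_singleton_iff, Option.some.injEq] at hx1 hy1
        have e1 : ((n * k + n / 2 : ℕ) : ZMod (n*m)) = ((n*k + h : ℕ) : ZMod (n*m)) := by
          rw [hhalf]
        have e2 : ((n * k + n / 2 + 1 : ℕ) : ZMod (n*m)) = ((n*k + (h+1) : ℕ) : ZMod (n*m)) := by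
          congr 1
          omega
        have e3 : ((n * k' + n / 2 : ℕ) : ZMod (n*m)) = ((n*k' + h : ℕ) : ZMod (n*m)) := by
          rw [hhalf]
        have e4 : ((n * k' + n / 2 + 1 : ℕ) : ZMod (n*m)) = ((n*k' + (h+1) : ℕ) : ZMod (n*m)) := by
          congr 1
          omega
        rcases hx1 with h1 | h1 <;> rcases hy1 with h2 | h2 <;>
          rw [h1, h2] <;>
          [rw [e1, e3]; rw [e1, e4]; rw [e2, e3]; rw [e2, e4]] <;>
          exact JahAux.key hn hm h hnh k k' hk hk' hsep _ _ (by omega) (by omega)
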